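/- arXiv:1409.0031 — 2 statements merged into one kernel-verified Lean document; each statement's English description precedes it below -/
import Mathlib

section
/- For all reals u, v > 0, all a ∈ [0, 1], and all b ≥ 0 with a·u + b > 0 (equivalently a·v + b > 0), one has kl(a·u + b ‖ a·v + b) ≤ a·kl(u ‖ v); when a·u + b = 0 (i.e. a = 0 and b = 0) the left-hand side is 0 by convention and the inequality still holds. -/
/-- Scalar Bregman divergence `kl(u‖v) = u·log(u/v) − u + v`.
With Lean's conventions (`log 0 = 0`, `0 * x = 0`) this also encodes `kl(0‖0) = 0`. -/
noncomputable def kl (u v : ℝ) : ℝ := u * Real.log (u / v) - u + v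

/-!
`kl` is positively homogeneous, and for `v > 0` it is the perspective `v · φ(u/v)` of the convex
function `φ = InformationTheory.klFun`, `φ x = x log x + 1 - x`. Adding `b ≥ 0` to both arguments
replaces `u/v` by the convex combination `(v·(u/v) + b·1)/(v + b)`; since `φ 1 = 0`, convexity of
`φ` gives `kl(u + b ‖ v + b) ≤ kl(u ‖ v)`. Applying this to `a·u, a·v` and using homogeneity
yields the theorem.
-/

open Real InformationTheory

lemma kl_self (u : ℝ) : kl u u = 0 := by
  rcases eq_or_ne u 0 with rfl | hu
  · simp [kl]
  · simp [kl, div_self hu]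

lemma kl_mul_mul (a u v : ℝ) : kl (a * u) (a * v) = a * kl u v := by
  rcases eq_or_ne a 0 with rfl | ha
  · simp [kl]
  · rw [kl, kl, mul_div_mul_left u v ha]
    ring

lemma kl_eq_mul_klFun (u : ℝ) {v : ℝ} (hv : v ≠ 0) : kl u v = v * klFun (u / v) := by
  rw [kl, klFun]
  field_simp
  ring

lemma kl_add_add_le {u v b : ℝ} (hu : 0 ≤ u) (hv : 0 < v) (hb : 0 ≤ b) :
    kl (u + b) (v + b) ≤ kl u v := by
  have hvb : 0 < v + b := by positivity
  have hconvex : klFun ((v / (v + b)) • (u / v) + (b / (v + b)) • 1)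
      ≤ (v / (v + b)) • klFun (u / v) + (b / (v + b)) • klFun 1 :=
    convexOn_klFun.2 (Set.mem_Ici.2 (by positivity)) (Set.mem_Ici.2 zero_le_one)
      (by positivity) (by positivity) (by field_simp)
  have hmix : (v / (v + b)) • (u / v) + (b / (v + b)) • (1 : ℝ) = (u + b) / (v + b) := by
    simp only [smul_eq_mul]
    field_simp
  rw [hmix, klFun_one, smul_eq_mul, smul_eq_mul, mul_zero, add_zero] at hconvex
  calc kl (u + b) (v + b) = (v + b) * klFun ((u + b) / (v + b)) := kl_eq_mul_klFun _ hvb.ne'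
    _ ≤ (v + b) * (v / (v + b) * klFun (u / v)) := mul_le_mul_of_nonneg_left hconvex hvb.le
    _ = kl u v := by rw [kl_eq_mul_klFun u hv.ne']; field_simp

/-- For `u, v > 0`, `a ∈ [0,1]`, `b ≥ 0`: `kl(a·u + b ‖ a·v + b) ≤ a·kl(u‖v)`.
(When `a = 0` and `b = 0`, both sides are `0` under the convention `kl(0‖0) = 0`,
which is automatic with Lean's `log 0 = 0`.) -/
theorem stmt_6 (u v a b : ℝ) (hu : 0 < u) (hv : 0 < v)
    (ha : a ∈ Set.Icc (0 : ℝ) 1) (hb : 0 ≤ b) :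
    kl (a * u + b) (a * v + b) ≤ a * kl u v := by
  rcases ha.1.eq_or_lt with rfl | ha
  · simp [kl_self]
  · calc kl (a * u + b) (a * v + b) ≤ kl (a * u) (a * v) :=
          kl_add_add_le (by positivity) (by positivity) hb
      _ = a * kl u v := kl_mul_mul a u v
end

section
/- Fix p ≥ 1, a horizon T > 0, a window size δ > 0 with T/δ a positive integer, α ∈ (0, 1), a matrix W ∈ ℝ₊^{p×p} with all entries satisfying 0 ≤ W_{i,j} ≤ Wmax, and a baseline μ̄ ∈ ℝ₊^p. Let (k_n, τ_n), n = 1, …, N_T, be events with k_n ∈ {1, …, p} and 0 < τ_n ≤ T. Then the integral-approximation error satisfies |Σ_{k=1}^p ( ∫_0^T μ_k(τ) dτ − Σ_{t=1}^{T/δ} δ·λ_{t,k} )| ≤ (3/2)·p·N_T·Wmax·δ. -/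
open scoped Classical

/-- Continuous-time multivariate Hawkes rate with exponential influence
`h(τ) = α^τ·1_{τ>0}`: `μ_k(s) = μ̄_k + Σ_{n : τ_n < s} W_{k,k_n}·α^{s − τ_n}`. -/
noncomputable def contRate (p N : ℕ) (α : ℝ) (W : Matrix (Fin p) (Fin p) ℝ)
    (μbar : Fin p → ℝ) (kn : Fin N → Fin p) (τ : Fin N → ℝ) (k : Fin p) (s : ℝ) : ℝ :=
  μbar k + ∑ n ∈ Finset.univ.filter (fun n => τ n < s), W k (kn n) * α ^ (s - τ n)

/-- Discretized rate `λ_{t,k} = μ̄_k + Σ_{n : τ̄_n < δt} W_{k,k_n}·α^{δt − τ_n}`,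
where `τ̄_n = ⌈τ_n/δ⌉·δ`. -/
noncomputable def discRate (p N : ℕ) (δ α : ℝ) (W : Matrix (Fin p) (Fin p) ℝ)
    (μbar : Fin p → ℝ) (kn : Fin N → Fin p) (τ : Fin N → ℝ) (t : ℕ) (k : Fin p) : ℝ :=
  μbar k + ∑ n ∈ Finset.univ.filter (fun n => (⌈τ n / δ⌉ : ℝ) * δ < δ * t),
    W k (kn n) * α ^ (δ * t - τ n)

open MeasureTheory Set Finset

/-!
Each event `n` adds `W_{k,k_n}·g_n` to `μ_k`, with `g_n(s) = α^{s − τ_n}` for `s > τ_n`, and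
`W_{k,k_n}·δ·g_n(δt)` to `δ·λ_{t,k}` for the grid points `δt > τ̄_n`. The error is therefore
`Σ_k Σ_n W_{k,k_n}·E_n`, where `E_n` compares `∫_{τ_n}^T g_n` with a right Riemann sum of `g_n`
on the grid from `τ̄_n` to `T`. As `g_n` is decreasing, the Riemann sum underestimates, so
`E_n ≥ 0`. The stretch `[τ_n, τ̄_n]` has length at most `δ` and `g_n ≤ 1` there; on the grid,
convexity of `g_n` bounds each cell integral by the trapezoid rule, and the trapezoid sum exceeds
the right Riemann sum by a telescoping `δ/2·(g_n(τ̄_n) − g_n(T)) ≤ δ/2`. Hence `E_n ≤ 3δ/2`.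
-/

section Interval

variable {f : ℝ → ℝ} {a b : ℝ}

theorem ConvexOn.map_add_map_reflect_le (hf : ConvexOn ℝ (Icc a b) f) {s : ℝ} (hs : s ∈ Icc a b) :
    f s + f (a + b - s) ≤ f a + f b := by
  rcases hs.1.eq_or_lt with rfl | has
  · simp
  have hab : 0 < b - a := by linarith [hs.2]
  set t := (b - s) / (b - a) with ht
  have ht0 : 0 ≤ t := div_nonneg (by linarith [hs.2]) hab.le
  have ht1 : 0 ≤ 1 - t := by
    rw [ht, one_sub_div hab.ne']; exact div_nonneg (by linarith) hab.le
  have ha : a ∈ Icc a b := left_mem_Icc.2 (by linarith)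
  have hb : b ∈ Icc a b := right_mem_Icc.2 (by linarith)
  have hs_eq : t • a + (1 - t) • b = s := by simp only [smul_eq_mul, ht]; field_simp; ring
  have hrefl_eq : (1 - t) • a + t • b = a + b - s := by
    simp only [smul_eq_mul, ht]; field_simp; ring
  have h₁ := hf.2 ha hb ht0 ht1 (by ring)
  have h₂ := hf.2 ha hb ht1 ht0 (by ring)
  rw [hs_eq] at h₁
  rw [hrefl_eq] at h₂
  simp only [smul_eq_mul] at h₁ h₂
  linarith

theorem ConvexOn.integral_le_trapezoid (hf : ConvexOn ℝ (Icc a b) f) (hab : a ≤ b)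
    (hfi : IntervalIntegrable f volume a b) :
    ∫ s in a..b, f s ≤ (b - a) * (f a + f b) / 2 := by
  have hrefl_int : IntervalIntegrable (fun s ↦ f (a + b - s)) volume a b := by
    simpa using (hfi.comp_sub_left (a + b)).symm
  have hrefl : ∫ s in a..b, f (a + b - s) = ∫ s in a..b, f s := by
    rw [intervalIntegral.integral_comp_sub_left]; congr 1 <;> ring
  have hsum : ∫ s in a..b, (f s + f (a + b - s)) ≤ ∫ _ in a..b, (f a + f b) :=
    intervalIntegral.integral_mono_on hab (hfi.add hrefl_int) intervalIntegrable_const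
      fun s hs ↦ hf.map_add_map_reflect_le hs
  rw [intervalIntegral.integral_add hfi hrefl_int, hrefl, intervalIntegral.integral_const,
    smul_eq_mul] at hsum
  linarith

theorem AntitoneOn.mul_le_integral (hf : AntitoneOn f (Icc a b)) (hab : a ≤ b) :
    (b - a) * f b ≤ ∫ s in a..b, f s := by
  have := intervalIntegral.integral_mono_on (μ := volume) hab intervalIntegrable_const
    (AntitoneOn.intervalIntegrable (by rwa [uIcc_of_le hab]))
    fun s hs ↦ hf hs (right_mem_Icc.2 hab) hs.2
  simpa using this

theorem AntitoneOn.integral_le_mul (hf : AntitoneOn f (Icc a b)) (hab : a ≤ b) :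
    ∫ s in a..b, f s ≤ (b - a) * f a := by
  have := intervalIntegral.integral_mono_on (μ := volume) hab
    (AntitoneOn.intervalIntegrable (by rwa [uIcc_of_le hab])) intervalIntegrable_const
    fun s hs ↦ hf (left_mem_Icc.2 hab) hs hs.1
  simpa using this

end Interval

section RiemannSum

variable {g : ℝ → ℝ} {δ : ℝ} {m M : ℕ}

theorem Antitone.sum_Icc_le_integral (hg : Antitone g) (hδ : 0 ≤ δ) (hmM : m ≤ M) :
    ∑ t ∈ Icc (m + 1) M, δ * g (δ * t) ≤ ∫ s in δ * m..δ * M, g s := by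
  induction M, hmM using Nat.le_induction with
  | base => simp
  | succ M hmM ih =>
    have hcell := (hg.antitoneOn (Icc (δ * M) (δ * (M + 1)))).mul_le_integral
      (by nlinarith)
    rw [sum_Icc_succ_top (by omega), ← intervalIntegral.integral_add_adjacent_intervals
      hg.intervalIntegrable hg.intervalIntegrable]
    push_cast
    linarith [show δ * (M + 1) - δ * M = δ by ring]

theorem ConvexOn.integral_le_sum_Icc_add (hg : ConvexOn ℝ univ g) (hδ : 0 ≤ δ) (hmM : m ≤ M) :
    ∫ s in δ * m..δ * M, g s ≤
      ∑ t ∈ Icc (m + 1) M, δ * g (δ * t) + δ / 2 * (g (δ * m) - g (δ * M)) := by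
  have hgc : Continuous g := continuousOn_univ.1 (hg.continuousOn isOpen_univ)
  induction M, hmM using Nat.le_induction with
  | base => simp
  | succ M hmM ih =>
    have hcell := (hg.subset (subset_univ (Icc (δ * M) (δ * (M + 1)))) (convex_Icc _ _))
      |>.integral_le_trapezoid (by nlinarith) (hgc.intervalIntegrable _ _)
    rw [sum_Icc_succ_top (by omega), ← intervalIntegral.integral_add_adjacent_intervals
      (b := δ * M) (hgc.intervalIntegrable _ _) (hgc.intervalIntegrable _ _)]
    push_cast
    linarith [show δ * (M + 1) - δ * M = δ by ring]

theorem Antitone.integral_sub_sum_Icc_mem_Icc {d : ℝ} (hg : Antitone g)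
    (hgc : ConvexOn ℝ univ g) (hg0 : ∀ x, 0 ≤ g x) (hδ : 0 ≤ δ) (hmM : m ≤ M)
    (hdm : d ≤ δ * m) (hmd : δ * m ≤ d + δ) :
    (∫ s in d..δ * M, g s) - ∑ t ∈ Icc (m + 1) M, δ * g (δ * t) ∈ Icc 0 (3 / 2 * δ * g d) := by
  rw [← intervalIntegral.integral_add_adjacent_intervals (b := δ * m) hg.intervalIntegrable
    hg.intervalIntegrable]
  have hhead_lo := (hg.antitoneOn (Icc d (δ * m))).mul_le_integral hdm
  have hhead_hi := (hg.antitoneOn (Icc d (δ * m))).integral_le_mul hdm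
  have hbody_lo := hg.sum_Icc_le_integral hδ hmM
  have hbody_hi := hgc.integral_le_sum_Icc_add hδ hmM
  constructor
  · linarith [mul_nonneg (sub_nonneg.2 hdm) (hg0 (δ * m))]
  · have hhead : (δ * m - d) * g d ≤ δ * g d :=
      mul_le_mul_of_nonneg_right (by linarith) (hg0 d)
    have htail : δ / 2 * (g (δ * m) - g (δ * M)) ≤ δ / 2 * g d :=
      mul_le_mul_of_nonneg_left (by linarith [hg hdm, hg0 (δ * M)]) (by linarith)
    linarith

end RiemannSum

section Indicator

variable {f : ℝ → ℝ} {a b c : ℝ}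

theorem intervalIntegrable_ite_lt (hf : IntervalIntegrable f volume a b) :
    IntervalIntegrable (fun s ↦ if c < s then f s else 0) volume a b := by
  have hind : (fun s ↦ if c < s then f s else 0) = (Ioi c).indicator f := by
    ext s; simp [indicator]
  rw [hind, intervalIntegrable_iff]
  exact (intervalIntegrable_iff.1 hf).indicator measurableSet_Ioi

theorem integral_ite_lt (hac : a ≤ c) (hcb : c ≤ b) (hf : IntervalIntegrable f volume a b) :
    ∫ s in a..b, (if c < s then f s else 0) = ∫ s in c..b, f s := by
  have hsub : ∀ {x y}, x ∈ Icc a b → y ∈ Icc a b → uIcc x y ⊆ uIcc a b := fun hx hy ↦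
    uIcc_subset_uIcc (Icc_subset_uIcc hx) (Icc_subset_uIcc hy)
  have ha : a ∈ Icc a b := left_mem_Icc.2 (hac.trans hcb)
  have hb : b ∈ Icc a b := right_mem_Icc.2 (hac.trans hcb)
  have hc : c ∈ Icc a b := ⟨hac, hcb⟩
  rw [← intervalIntegral.integral_add_adjacent_intervals
    (intervalIntegrable_ite_lt (hf.mono_set (hsub ha hc)))
    (intervalIntegrable_ite_lt (hf.mono_set (hsub hc hb)))]
  have hbefore : ∫ s in a..c, (if c < s then f s else 0) = 0 := by
    rw [intervalIntegral.integral_congr (g := fun _ ↦ 0), intervalIntegral.integral_zero]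
    intro s hs
    rw [uIcc_of_le hac] at hs
    simp [not_lt.2 hs.2]
  have hafter : ∫ s in c..b, (if c < s then f s else 0) = ∫ s in c..b, f s := by
    refine intervalIntegral.integral_congr_ae (Filter.Eventually.of_forall fun s hs ↦ ?_)
    rw [uIoc_of_le hcb] at hs
    simp [hs.1]
  rw [hbefore, hafter, zero_add]

end Indicator

theorem intCast_ceil_mul_lt_mul_iff {x δ : ℝ} (hx : 0 ≤ x) (hδ : 0 < δ) {t : ℕ} :
    (⌈x⌉ : ℝ) * δ < δ * t ↔ ⌈x⌉₊ < t := by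
  rw [← natCast_ceil_eq_intCast_ceil hx, mul_comm, mul_lt_mul_iff_right₀ hδ, Nat.cast_lt]

section Hawkes

variable {p N : ℕ} {α δ T : ℝ} {W : Matrix (Fin p) (Fin p) ℝ} {μbar : Fin p → ℝ}
  {kn : Fin N → Fin p} {τ : Fin N → ℝ}

theorem integral_contRate (hα : 0 < α) (hτ : ∀ n, τ n ∈ Icc 0 T) (k : Fin p) :
    ∫ s in (0 : ℝ)..T, contRate p N α W μbar kn τ k s =
      T * μbar k + ∑ n, W k (kn n) * ∫ s in τ n..T, α ^ (s - τ n) := by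
  have hker : ∀ n, IntervalIntegrable (fun s ↦ W k (kn n) * α ^ (s - τ n)) volume 0 T :=
    fun n ↦ (continuous_const.mul (continuous_const.rpow (continuous_id.sub continuous_const)
      fun _ ↦ Or.inl hα.ne')).intervalIntegrable _ _
  have hterm : ∀ n ∈ (univ : Finset (Fin N)), IntervalIntegrable
      (fun s ↦ if τ n < s then W k (kn n) * α ^ (s - τ n) else 0) volume 0 T :=
    fun n _ ↦ intervalIntegrable_ite_lt (hker n)
  simp only [contRate, sum_filter]
  rw [intervalIntegral.integral_add intervalIntegrable_const
      (by simpa only [Finset.sum_fn] using IntervalIntegrable.sum univ hterm),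
    intervalIntegral.integral_const, intervalIntegral.integral_finsetSum hterm]
  simp only [smul_eq_mul, sub_zero]
  congr 1
  refine sum_congr rfl fun n _ ↦ ?_
  rw [integral_ite_lt (hτ n).1 (hτ n).2 (hker n), intervalIntegral.integral_const_mul]

theorem sum_discRate (hδ : 0 < δ) (hτ : ∀ n, 0 ≤ τ n) (M : ℕ) (k : Fin p) :
    ∑ t ∈ Icc 1 M, δ * discRate p N δ α W μbar kn τ t k =
      M * δ * μbar k +
        ∑ n, W k (kn n) * ∑ t ∈ Icc (⌈τ n / δ⌉₊ + 1) M, δ * α ^ (δ * t - τ n) := by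
  simp only [discRate, mul_add, sum_add_distrib, mul_sum]
  congr 1
  · simp only [sum_const, Nat.card_Icc, add_tsub_cancel_right, nsmul_eq_mul]
    ring
  · refine (sum_comm' fun t n ↦ ?_).trans
      (sum_congr rfl fun n _ ↦ sum_congr rfl fun t _ ↦ by ring)
    simp only [Finset.mem_Icc, mem_filter, Finset.mem_univ, true_and, and_true,
      intCast_ceil_mul_lt_mul_iff (div_nonneg (hτ n) hδ.le) hδ]
    omega

end Hawkes

theorem integral_sub_sum_rpow_mem_Icc {α δ τ : ℝ} {M : ℕ} (hα : α ∈ Set.Ioo 0 1) (hδ : 0 < δ)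
    (hτ : τ ∈ Icc 0 (M * δ)) :
    (∫ s in τ..δ * M, α ^ (s - τ)) - ∑ t ∈ Icc (⌈τ / δ⌉₊ + 1) M, δ * α ^ (δ * t - τ) ∈
      Icc 0 (3 / 2 * δ) := by
  have hanti : Antitone fun s ↦ α ^ (s - τ) := fun x y hxy ↦
    Real.antitone_rpow_of_base_le_one hα.1 hα.2.le (by linarith : x - τ ≤ y - τ)
  have hconv : ConvexOn ℝ univ fun s ↦ α ^ (s - τ) := by
    simpa [Function.comp_def, neg_add_eq_sub] using (convexOn_rpow_left hα.1).translate_right (-τ)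
  have hτδ : 0 ≤ τ / δ := div_nonneg hτ.1 hδ.le
  have hm_le : τ ≤ δ * ⌈τ / δ⌉₊ := by
    rw [← div_le_iff₀' hδ]; exact Nat.le_ceil _
  have hm_lt : δ * ⌈τ / δ⌉₊ ≤ τ + δ := by
    have := Nat.ceil_lt_add_one hτδ
    rw [← le_div_iff₀' hδ, add_div, div_self hδ.ne']; exact this.le
  have hmM : ⌈τ / δ⌉₊ ≤ M := Nat.ceil_le.2 ((div_le_iff₀ hδ).2 hτ.2)
  simpa using hanti.integral_sub_sum_Icc_mem_Icc hconv
    (fun s ↦ (Real.rpow_pos_of_pos hα.1 _).le) hδ.le hmM hm_le hm_lt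

theorem stmt_15_general (p : ℕ) (T δ α Wmax : ℝ) (M : ℕ)
    (hδ : 0 < δ) (hT : T = M * δ)
    (hα : α ∈ Set.Ioo (0 : ℝ) 1)
    (W : Matrix (Fin p) (Fin p) ℝ) (hW : ∀ i j, 0 ≤ W i j ∧ W i j ≤ Wmax)
    (μbar : Fin p → ℝ)
    (N : ℕ) (kn : Fin N → Fin p) (τ : Fin N → ℝ)
    (hτ : ∀ n, 0 < τ n ∧ τ n ≤ T) :
    |∑ k, ((∫ s in (0:ℝ)..T, contRate p N α W μbar kn τ k s) -
        ∑ t ∈ Finset.Icc 1 M, δ * discRate p N δ α W μbar kn τ t k)|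
      ≤ 3 / 2 * p * N * Wmax * δ := by
  set E : Fin N → ℝ := fun n ↦ (∫ s in τ n..δ * M, α ^ (s - τ n)) -
    ∑ t ∈ Icc (⌈τ n / δ⌉₊ + 1) M, δ * α ^ (δ * t - τ n)
  have hτ' : ∀ n, τ n ∈ Icc 0 T := fun n ↦ ⟨(hτ n).1.le, (hτ n).2⟩
  have hE : ∀ n, E n ∈ Icc 0 (3 / 2 * δ) := fun n ↦
    integral_sub_sum_rpow_mem_Icc hα hδ (hT ▸ hτ' n)
  have hsplit : ∀ k, (∫ s in (0:ℝ)..T, contRate p N α W μbar kn τ k s) -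
      ∑ t ∈ Icc 1 M, δ * discRate p N δ α W μbar kn τ t k = ∑ n, W k (kn n) * E n := fun k ↦ by
    rw [integral_contRate hα.1 hτ', sum_discRate hδ (fun n ↦ (hτ' n).1), hT]
    simp only [E, mul_sub, sum_sub_distrib, mul_comm δ]
    ring
  have hterm : ∀ k n, W k (kn n) * E n ∈ Icc 0 (Wmax * (3 / 2 * δ)) := fun k n ↦
    ⟨mul_nonneg (hW k (kn n)).1 (hE n).1,
      (mul_le_mul_of_nonneg_left (hE n).2 (hW k (kn n)).1).trans
        (mul_le_mul_of_nonneg_right (hW k (kn n)).2 (by positivity))⟩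
  rw [sum_congr rfl fun k _ ↦ hsplit k,
    abs_of_nonneg (sum_nonneg fun k _ ↦ sum_nonneg fun n _ ↦ (hterm k n).1)]
  calc ∑ k, ∑ n, W k (kn n) * E n
      ≤ ∑ _k : Fin p, ∑ _n : Fin N, Wmax * (3 / 2 * δ) :=
        sum_le_sum fun k _ ↦ sum_le_sum fun n _ ↦ (hterm k n).2
    _ = 3 / 2 * p * N * Wmax * δ := by
        simp only [sum_const, card_univ, Fintype.card_fin, nsmul_eq_mul]
        ring

/-- Integral-approximation bound in the proof of Lemma 1:
`|Σ_k (∫₀ᵀ μ_k(τ)dτ − Σ_{t=1}^{T/δ} δ·λ_{t,k})| ≤ (3/2)·p·N_T·Wmax·δ`. -/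
theorem stmt_15 (p : ℕ) (hp : 1 ≤ p) (T δ α Wmax : ℝ) (M : ℕ)
    (hδ : 0 < δ) (hM : 0 < M) (hT : T = M * δ)
    (hα : α ∈ Set.Ioo (0 : ℝ) 1)
    (W : Matrix (Fin p) (Fin p) ℝ) (hW : ∀ i j, 0 ≤ W i j ∧ W i j ≤ Wmax)
    (μbar : Fin p → ℝ) (hμ : ∀ k, 0 ≤ μbar k)
    (N : ℕ) (kn : Fin N → Fin p) (τ : Fin N → ℝ)
    (hτ : ∀ n, 0 < τ n ∧ τ n ≤ T) :
    |∑ k, ((∫ s in (0:ℝ)..T, contRate p N α W μbar kn τ k s) -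
        ∑ t ∈ Finset.Icc 1 M, δ * discRate p N δ α W μbar kn τ t k)|
      ≤ 3 / 2 * p * N * Wmax * δ :=
  stmt_15_general p T δ α Wmax M hδ hT hα W hW μbar N kn τ hτ
end
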